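/- Let K ≥ 2 be an integer and let r, s be positive integers with r < K and s < K. Then ∑_{n=0}^{2K-2s} C(2K-2r, 2K-2s-n+1) · C(n+2s-2, n) · B_n = -∑_{n=0}^{2K-2s} C(2r-1, 2K-2s-n+1) · C(n+2s-2, n) · B_n, where B_n are the Bernoulli numbers and C(a,b) are binomial coefficients (with C(a,b) = 0 when a < b for integer a ≥ 0). -/

import Mathlib

/-!
Write `S_c(m, a) = ∑_{i + j = m} C(i + c, i) B_i C(a, j)`. Pascal's rule in `a` gives
`S_c(m + 1, a + 1) = S_c(m + 1, a) + S_c(m, a)`, and the two boundary values are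
`S_c(m, 0) = C(m + c, m) B_m` and `S_c(m, m + c) = C(m + c, m) B'_m = (-1)^m S_c(m, 0)`,
the latter because `C(i + c, i) C(m + c, j) = C(m + c, m) C(m, i)` reduces it to
`∑ C(m, i) B_i = B'_m` (Bernoulli numbers with `B'_1 = 1/2`). A double induction on `m` and `a`
then yields the reflection law
`S_c(m, a) = (-1)^m S_c(m, m + c - a)` for `a ≤ m + c`. The theorem is the case
`m = 2K - 2s + 1`, `c = 2s - 2`, `a = 2K - 2r`, for which `m + c - a = 2r - 1`; the two given
sums omit only the term `i = m`, which vanishes since `m ≥ 3` is odd.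
-/

open Finset

theorem sum_range_succ_choose_mul_bernoulli (m : ℕ) :
    ∑ k ∈ range (m + 1), (m.choose k : ℚ) * bernoulli k = bernoulli' m := by
  rw [sum_range_succ, sum_bernoulli, Nat.choose_self, Nat.cast_one, one_mul]
  obtain rfl | hm := eq_or_ne m 1
  · norm_num
  · rw [if_neg hm, zero_add, bernoulli_eq_bernoulli'_of_ne_one hm]

theorem Nat.choose_add_mul_choose_add_add (i j c : ℕ) :
    (i + c).choose i * (i + j + c).choose j = (i + j + c).choose (i + j) * (i + j).choose i := by
  have h := Nat.choose_mul (n := i + j + c) (k := i + j) (s := j) (by omega)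
  rw [show i + j + c - j = i + c by omega, show i + j - j = i by omega,
    ← Nat.choose_symm_add] at h
  rw [h, mul_comm]

def bernoulliChooseSum (c m a : ℕ) : ℚ :=
  ∑ p ∈ antidiagonal m, ((p.1 + c).choose p.1 : ℚ) * bernoulli p.1 * a.choose p.2

namespace bernoulliChooseSum

theorem succ_succ (c m a : ℕ) :
    bernoulliChooseSum c (m + 1) (a + 1) =
      bernoulliChooseSum c (m + 1) a + bernoulliChooseSum c m a := by
  simp only [bernoulliChooseSum, Nat.sum_antidiagonal_succ', Nat.choose_succ_succ',
    Nat.choose_zero_right, Nat.cast_add, mul_add, sum_add_distrib]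
  ring

theorem zero_right (c m : ℕ) :
    bernoulliChooseSum c m 0 = ((m + c).choose m : ℚ) * bernoulli m := by
  cases m with
  | zero => simp [bernoulliChooseSum]
  | succ m => simp [bernoulliChooseSum, Nat.sum_antidiagonal_succ']

theorem self_add (c m : ℕ) :
    bernoulliChooseSum c m (m + c) = ((m + c).choose m : ℚ) * bernoulli' m := by
  have hchoose : ∀ p ∈ antidiagonal m,
      ((p.1 + c).choose p.1 : ℚ) * bernoulli p.1 * (m + c).choose p.2 =
        (m + c).choose m * ((m.choose p.1 : ℚ) * bernoulli p.1) := by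
    rintro ⟨i, j⟩ hij
    rw [HasAntidiagonal.mem_antidiagonal] at hij
    subst hij
    rw [mul_right_comm, ← mul_assoc, ← Nat.cast_mul, Nat.choose_add_mul_choose_add_add,
      Nat.cast_mul]
  rw [bernoulliChooseSum, sum_congr rfl hchoose, ← mul_sum,
    Nat.sum_antidiagonal_eq_sum_range_succ (fun i _ => (m.choose i : ℚ) * bernoulli i),
    sum_range_succ_choose_mul_bernoulli]

theorem reflect (c m a : ℕ) (ha : a ≤ m + c) :
    bernoulliChooseSum c m a = (-1) ^ m * bernoulliChooseSum c m (m + c - a) := by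
  induction m generalizing a with
  | zero => simp [bernoulliChooseSum]
  | succ m ihm =>
    induction a with
    | zero =>
      have hsq : ((-1 : ℚ) ^ (m + 1)) ^ 2 = 1 := by
        rw [← pow_mul, pow_mul', neg_one_sq, one_pow]
      rw [Nat.sub_zero, zero_right, self_add, bernoulli'_eq_bernoulli]
      linear_combination (-((m + 1 + c).choose (m + 1) : ℚ) * bernoulli (m + 1)) * hsq
    | succ a iha =>
      have hpascal := succ_succ c m (m + c - a)
      rw [show m + c - a + 1 = m + 1 + c - a by omega] at hpascal
      rw [succ_succ, iha (by omega), ihm a (by omega), hpascal,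
        show m + c - a = m + 1 + c - (a + 1) by omega, pow_succ]
      ring

end bernoulliChooseSum

theorem two_sums_equal_general (K r s : ℕ) (hr1 : 1 ≤ r) (hr2 : r ≤ K - 1)
    (hs1 : 1 ≤ s) (hs2 : s ≤ K - 1) :
    ∑ n ∈ Finset.range (2 * K - 2 * s + 1),
        ((2 * K - 2 * r).choose (2 * K - 2 * s - n + 1) : ℚ) *
          ((n + 2 * s - 2).choose n : ℚ) * bernoulli n =
      -∑ n ∈ Finset.range (2 * K - 2 * s + 1),
          ((2 * r - 1).choose (2 * K - 2 * s - n + 1) : ℚ) *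
            ((n + 2 * s - 2).choose n : ℚ) * bernoulli n := by
  set M := 2 * K - 2 * s
  have hodd : Odd (M + 1) := ⟨K - s, by omega⟩
  have hsum : ∀ a, ∑ n ∈ range (M + 1),
      (a.choose (M - n + 1) : ℚ) * ((n + 2 * s - 2).choose n : ℚ) * bernoulli n =
        bernoulliChooseSum (2 * s - 2) (M + 1) a := by
    intro a
    rw [bernoulliChooseSum, Nat.sum_antidiagonal_eq_sum_range_succ
      (fun i j => ((i + (2 * s - 2)).choose i : ℚ) * bernoulli i * a.choose j),
      sum_range_succ (n := M + 1), bernoulli_eq_zero_of_odd hodd (by omega), mul_zero, zero_mul,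
      add_zero]
    refine sum_congr rfl fun n hn => ?_
    rw [mem_range] at hn
    rw [show M - n + 1 = M + 1 - n by omega, show n + 2 * s - 2 = n + (2 * s - 2) by omega]
    ring
  rw [hsum, hsum, bernoulliChooseSum.reflect _ _ _ (by omega), hodd.neg_one_pow, neg_one_mul,
    show M + 1 + (2 * s - 2) - (2 * K - 2 * r) = 2 * r - 1 by omega]

theorem two_sums_equal (K r s : ℕ) (hK : 2 ≤ K) (hr1 : 1 ≤ r) (hr2 : r ≤ K - 1)
    (hs1 : 1 ≤ s) (hs2 : s ≤ K - 1) :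
    ∑ n ∈ Finset.range (2 * K - 2 * s + 1),
        ((2 * K - 2 * r).choose (2 * K - 2 * s - n + 1) : ℚ) *
          ((n + 2 * s - 2).choose n : ℚ) * bernoulli n =
      -∑ n ∈ Finset.range (2 * K - 2 * s + 1),
          ((2 * r - 1).choose (2 * K - 2 * s - n + 1) : ℚ) *
            ((n + 2 * s - 2).choose n : ℚ) * bernoulli n :=
  two_sums_equal_general K r s hr1 hr2 hs1 hs2
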